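/- Let f be a norm on ℝ^p with dual norm f*, let a ∈ ℝ^p with a ≠ 0, and b ∈ ℝ. For x ∈ ℝ^p define d_x := (b − ⟪a, x⟫) / f*(a). Let v ∈ ℝ^p be such that {v, v², …, v^p} is a basis of ℝ^p (so v ≠ 0), and define the counterfactual points v_CF := v + d_v • v and v^i_CF := v^i + d_{v^i} • v for i = 2, …, p. If v_CF ≠ 0, then the family {v_CF, v²_CF, …, v^p_CF} is linearly independent. -/
import Mathlib


open Finset

noncomputable section

/-- The standard inner product on `Fin p → ℝ`. -/
def dot {p : ℕ} (a x : Fin p → ℝ) : ℝ := ∑ k, a k * x k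

/-- `f` is a norm on `ℝ^p`. -/
def IsNorm {p : ℕ} (f : (Fin p → ℝ) → ℝ) : Prop :=
  (∀ x, f x = 0 ↔ x = 0) ∧ (∀ (c : ℝ) (x : Fin p → ℝ), f (c • x) = |c| * f x) ∧
    (∀ x y, f (x + y) ≤ f x + f y)

/-- The dual norm `f*(w) = sup { ⟪w, v⟫ : f v ≤ 1 }`. -/
def dualNorm {p : ℕ} (f : (Fin p → ℝ) → ℝ) (w : Fin p → ℝ) : ℝ :=
  sSup {t : ℝ | ∃ v : Fin p → ℝ, f v ≤ 1 ∧ t = dot w v}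

/-- `xCF` is an optimal counterfactual of the factual `xF` (classified 'No') under norm `f`. -/
def IsOptCF {p : ℕ} (a : Fin p → ℝ) (b : ℝ) (f : (Fin p → ℝ) → ℝ)
    (xF xCF : Fin p → ℝ) : Prop :=
  b ≤ dot a xCF ∧ ∀ z : Fin p → ℝ, b ≤ dot a z → f (xCF - xF) ≤ f (z - xF)

/-- `xRCF` is an optimal robust counterfactual of the factual `xF` (classified 'No')
under norm `f`, with robustness norm `g` and radius `ρ`. -/
def IsOptRCF {p : ℕ} (a : Fin p → ℝ) (b : ℝ) (f g : (Fin p → ℝ) → ℝ) (ρ : ℝ)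
    (xF xRCF : Fin p → ℝ) : Prop :=
  (∀ s : Fin p → ℝ, g s ≤ ρ → b ≤ dot a (xRCF + s)) ∧
    ∀ z : Fin p → ℝ, (∀ s : Fin p → ℝ, g s ≤ ρ → b ≤ dot a (z + s)) →
      f (xRCF - xF) ≤ f (z - xF)

/-- `w` is a subgradient of `f` at `x₀`. -/
def IsSubgradient {p : ℕ} (f : (Fin p → ℝ) → ℝ) (x₀ w : Fin p → ℝ) : Prop :=
  ∀ y : Fin p → ℝ, f x₀ + dot w (y - x₀) ≤ f y

/-- Lemma 3(i): if `w` is a basis of `ℝ^p` with first vector `v = w ⟨0, hp⟩`, and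
`c i = w i + d_{w i} • v` are the counterfactual points with
`d_x = (b − ⟪a, x⟫)/f*(a)`, then the family of counterfactuals is linearly
independent provided the counterfactual `c ⟨0, hp⟩` of `v` is nonzero. -/
theorem cf_basis_independent {p : ℕ} (hp : 1 ≤ p)
    (f : (Fin p → ℝ) → ℝ) (hf : IsNorm f)
    (a : Fin p → ℝ) (ha : a ≠ 0) (b : ℝ)
    (w : Fin p → (Fin p → ℝ))
    (hli : LinearIndependent ℝ w)
    (hspan : ⊤ ≤ Submodule.span ℝ (Set.range w))
    (c : Fin p → (Fin p → ℝ))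
    (hc : ∀ i, c i = w i + ((b - dot a (w i)) / dualNorm f a) • w ⟨0, hp⟩)
    (h0 : c ⟨0, hp⟩ ≠ 0) :
    LinearIndependent ℝ c := by
  set i0 : Fin p := ⟨0, hp⟩ with hi0
  set d : Fin p → ℝ := fun i => (b - dot a (w i)) / dualNorm f a with hd
  -- 1 + d i0 ≠ 0
  have hw0 : w i0 ≠ 0 := hli.ne_zero i0
  have hc0 : c i0 = (1 + d i0) • w i0 := by
    rw [hc i0, add_smul, one_smul]
  have hne : (1 : ℝ) + d i0 ≠ 0 := by
    intro h
    apply h0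
    rw [hc0, h, zero_smul]
  rw [Fintype.linearIndependent_iff]
  intro g hg
  set S : ℝ := ∑ j, g j * d j with hS
  have hg' : (∑ i, g i • w i) + S • w i0 = 0 := by
    simp_rw [hc, smul_add, Finset.sum_add_distrib, smul_smul] at hg
    rw [hS, Finset.sum_smul]
    exact hg
  have key : ∑ i, (g i + (if i = i0 then S else 0)) • w i = 0 := by
    simp only [add_smul, Finset.sum_add_distrib, ite_smul, zero_smul,
      Finset.sum_ite_eq', Finset.mem_univ, if_true]
    exact hg'
  have hz := Fintype.linearIndependent_iff.mp hli _ key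
  have hgz : ∀ i, i ≠ i0 → g i = 0 := by
    intro i hi
    have := hz i
    simpa [hi] using this
  have hSg : S = g i0 * d i0 := by
    rw [hS, Finset.sum_eq_single i0]
    · intro j _ hj; rw [hgz j hj, zero_mul]
    · intro h; exact absurd (Finset.mem_univ i0) h
  have h0' : g i0 * (1 + d i0) = 0 := by
    have h2 := hz i0
    rw [if_pos rfl, hSg] at h2
    ring_nf
    ring_nf at h2
    linarith
  have hgi0 : g i0 = 0 := by
    rcases mul_eq_zero.mp h0' with h | h
    · exact h
    · exact absurd h hne
  intro i
  by_cases hi : i = i0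
  · rw [hi]; exact hgi0
  · exact hgz i hi
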